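/- For |q| < 1, the triple sum ∑_{n₁,n₂,n₃≥0} q^{n₁+n₂+n₃+n₁n₂+n₂n₃} / ((q;q)_{n₁} (q;q)_{n₂} (q;q)_{n₃}) equals q^{-1}(1-(q;q)_∞)/(q;q)_∞². -/

import Mathlib

/-- The finite q-Pochhammer symbol `(q;q)_n`. -/
noncomputable def qPoch (q : ℂ) (n : ℕ) : ℂ := ∏ i ∈ Finset.range n, (1 - q ^ (i + 1))

/-- The infinite q-Pochhammer symbol `(q;q)_∞`. -/
noncomputable def qPochInf (q : ℂ) : ℂ := ∏' i : ℕ, (1 - q ^ (i + 1))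

/-- The infinite q-Pochhammer symbol `(a;q)_∞ = ∏_{i≥0} (1 - a q^i)`. -/
noncomputable def pochInf (a q : ℂ) : ℂ := ∏' i : ℕ, (1 - a * q ^ i)

/-!
Summing first over the middle index `m = n₂`, the exponent is `m + (m + 1) n₁ + (m + 1) n₃`, so
the inner double sum is `q^m / (q;q)_m · e(q^{m+1})²` with `e(z) = ∑ z^n / (q;q)_n`.
Euler's identity `e(q^{m+1}) = (q;q)_m / (q;q)_∞` (from `e(zq) = (1 - z) e(z)` and `e(0) = 1`)
turns the outer sum into `∑ q^m (q;q)_m / (q;q)_∞²`, and `q^{m+1} (q;q)_m = (q;q)_m - (q;q)_{m+1}`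
telescopes to `1 - (q;q)_∞`.
-/

open Filter Topology

lemma Summable.tsum_eq_tsum_tsum_middle {α β γ G : Type*} [AddCommGroup G] [UniformSpace G]
    [IsUniformAddGroup G] [CompleteSpace G] [T0Space G] {f : α × β × γ → G}
    (hf : Summable fun x : β × α × γ => f (x.2.1, x.1, x.2.2)) :
    ∑' x, f x = ∑' b, ∑' p : α × γ, f (p.1, b, p.2) := by
  let e : β × α × γ ≃ α × β × γ :=
    ⟨fun x => (x.2.1, x.1, x.2.2), fun x => (x.2.1, x.1, x.2.2), fun _ => rfl, fun _ => rfl⟩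
  exact (e.tsum_eq f).symm.trans hf.tsum_prod

lemma exists_norm_le_of_tendsto {E : Type*} [SeminormedAddCommGroup E] {u : ℕ → E} {x : E}
    (hu : Tendsto u atTop (𝓝 x)) : ∃ C, ∀ n, ‖u n‖ ≤ C := by
  obtain ⟨C, hC⟩ := isBounded_iff_forall_norm_le.1 (Metric.isBounded_range_of_tendsto u hu)
  exact ⟨C, fun n => hC _ ⟨n, rfl⟩⟩

lemma qPoch_zero (q : ℂ) : qPoch q 0 = 1 := rfl

lemma qPoch_succ (q : ℂ) (n : ℕ) : qPoch q (n + 1) = qPoch q n * (1 - q ^ (n + 1)) :=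
  Finset.prod_range_succ _ n

noncomputable def qExp (q z : ℂ) : ℂ := ∑' n, z ^ n / qPoch q n

lemma pow_div_qPoch_mul_qPoch_mul_qPoch (q : ℂ) (n₁ m n₃ : ℕ) :
    q ^ (n₁ + m + n₃ + n₁ * m + m * n₃) / (qPoch q n₁ * qPoch q m * qPoch q n₃)
      = q ^ m / qPoch q m *
          ((q ^ (m + 1)) ^ n₁ / qPoch q n₁ * ((q ^ (m + 1)) ^ n₃ / qPoch q n₃)) := by
  ring

section UnitDisc

variable {q : ℂ} (hq : ‖q‖ < 1)
include hq

lemma one_sub_pow_succ_ne_zero (i : ℕ) : 1 - q ^ (i + 1) ≠ 0 := by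
  rw [sub_ne_zero, ne_comm]
  refine ne_of_apply_ne norm ?_
  rw [norm_pow, norm_one]
  exact (pow_lt_one₀ (norm_nonneg q) hq i.succ_ne_zero).ne

lemma qPoch_ne_zero (n : ℕ) : qPoch q n ≠ 0 :=
  Finset.prod_ne_zero_iff.2 fun i _ => one_sub_pow_succ_ne_zero hq i

lemma qPochInf_ne_zero : qPochInf q ≠ 0 := by
  simp_rw [qPochInf, sub_eq_add_neg]
  refine tprod_one_add_ne_zero_of_summable (fun i => ?_) ?_
  · simpa [← sub_eq_add_neg] using one_sub_pow_succ_ne_zero hq i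
  · simpa using (summable_nat_add_iff 1).2 (summable_geometric_of_lt_one (norm_nonneg q) hq)

lemma tendsto_qPoch : Tendsto (qPoch q) atTop (𝓝 (qPochInf q)) :=
  (ModularForm.multipliable_one_sub_pow hq).hasProd.tendsto_prod_nat

lemma exists_norm_div_qPoch_le : ∃ C ≥ 0, ∀ (w : ℂ) n, ‖w / qPoch q n‖ ≤ C * ‖w‖ := by
  obtain ⟨C, hC⟩ := exists_norm_le_of_tendsto ((tendsto_qPoch hq).inv₀ (qPochInf_ne_zero hq))
  refine ⟨C, (norm_nonneg _).trans (hC 0), fun w n => ?_⟩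
  rw [div_eq_mul_inv, norm_mul, mul_comm]
  exact mul_le_mul_of_nonneg_right (hC n) (norm_nonneg w)

lemma hasSum_pow_succ_mul_qPoch : HasSum (fun n => q ^ (n + 1) * qPoch q n) (1 - qPochInf q) := by
  obtain ⟨M, hM⟩ := exists_norm_le_of_tendsto (tendsto_qPoch hq)
  have hsum : Summable fun n => ‖q ^ (n + 1) * qPoch q n‖ := by
    refine .of_nonneg_of_le (fun _ => norm_nonneg _) (fun n => ?_)
      ((summable_geometric_of_lt_one (norm_nonneg q) hq).mul_right M)
    rw [norm_mul, norm_pow]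
    exact mul_le_mul (pow_le_pow_of_le_one (norm_nonneg q) hq.le n.le_succ) (hM n)
      (norm_nonneg _) (by positivity)
  refine (hasSum_iff_tendsto_nat_of_summable_norm hsum).2 ?_
  have partial_sum : ∀ N, ∑ n ∈ Finset.range N, q ^ (n + 1) * qPoch q n = 1 - qPoch q N := by
    intro N
    rw [← qPoch_zero q, ← Finset.sum_range_sub']
    refine Finset.sum_congr rfl fun n _ => ?_
    rw [qPoch_succ]
    ring
  simpa only [partial_sum] using tendsto_const_nhds.sub (tendsto_qPoch hq)

lemma norm_pow_succ_le (m : ℕ) : ‖q ^ (m + 1)‖ ≤ ‖q‖ := by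
  rw [norm_pow]
  exact pow_le_of_le_one (norm_nonneg q) hq.le m.succ_ne_zero

lemma norm_pow_succ_lt_one (m : ℕ) : ‖q ^ (m + 1)‖ < 1 :=
  (norm_pow_succ_le hq m).trans_lt hq

lemma summable_norm_pow_div_qPoch {z : ℂ} (hz : ‖z‖ < 1) :
    Summable fun n => ‖z ^ n / qPoch q n‖ := by
  obtain ⟨C, -, hC⟩ := exists_norm_div_qPoch_le hq
  refine .of_nonneg_of_le (fun _ => norm_nonneg _) (fun n => (hC _ n).trans_eq ?_)
    ((summable_geometric_of_lt_one (norm_nonneg z) hz).mul_left C)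
  rw [norm_pow]

lemma hasSum_qExp {z : ℂ} (hz : ‖z‖ < 1) : HasSum (fun n => z ^ n / qPoch q n) (qExp q z) :=
  (summable_norm_pow_div_qPoch hq hz).of_norm.hasSum

lemma qExp_mul_right {z : ℂ} (hz : ‖z‖ < 1) : qExp q (z * q) = (1 - z) * qExp q z := by
  have hzq : ‖z * q‖ < 1 := by
    rw [norm_mul]
    exact mul_lt_one_of_nonneg_of_lt_one_left (norm_nonneg z) hz hq.le
  have hshift : ∀ n, z ^ (n + 1) / qPoch q (n + 1) - (z * q) ^ (n + 1) / qPoch q (n + 1)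
      = z * (z ^ n / qPoch q n) := by
    intro n
    rw [qPoch_succ]
    field_simp [qPoch_ne_zero hq n, one_sub_pow_succ_ne_zero hq n]
    ring
  have hdiff : HasSum (fun n => z ^ n / qPoch q n - (z * q) ^ n / qPoch q n) (z * qExp q z) := by
    rw [← hasSum_nat_add_iff' 1]
    simpa [hshift] using (hasSum_qExp hq hz).mul_left z
  linear_combination -((hasSum_qExp hq hz).sub (hasSum_qExp hq hzq)).unique hdiff

lemma tendsto_qExp_zero : Tendsto (qExp q) (𝓝 0) (𝓝 1) := by
  obtain ⟨C, hC0, hC⟩ := exists_norm_div_qPoch_le hq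
  have hqExp_zero : ∑' n, (0 : ℂ) ^ n / qPoch q n = 1 := by
    rw [tsum_eq_single 0 fun n hn => by simp [hn]]
    simp [qPoch_zero]
  rw [← hqExp_zero]
  refine tendsto_tsum_of_dominated_convergence (summable_geometric_two.mul_left C)
    (fun n => ((continuous_pow n).div_const _).tendsto 0) ?_
  filter_upwards [Metric.ball_mem_nhds (0 : ℂ) one_half_pos] with z hz n
  rw [mem_ball_zero_iff] at hz
  refine (hC _ n).trans ?_
  rw [norm_pow]
  gcongr

lemma qExp_pow_succ_eq_qPoch_mul (m : ℕ) : qExp q (q ^ (m + 1)) = qPoch q m * qExp q q := by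
  induction m with
  | zero => simp [qPoch_zero]
  | succ m ih =>
    rw [pow_succ, qExp_mul_right hq (norm_pow_succ_lt_one hq m), ih, qPoch_succ]
    ring

lemma qExp_self : qExp q q = (qPochInf q)⁻¹ := by
  have h1 : Tendsto (fun m => qExp q (q ^ (m + 1))) atTop (𝓝 1) :=
    (tendsto_qExp_zero hq).comp
      ((tendsto_pow_atTop_nhds_zero_of_norm_lt_one hq).comp (tendsto_add_atTop_nat 1))
  have h2 : Tendsto (fun m => qExp q (q ^ (m + 1))) atTop (𝓝 (qPochInf q * qExp q q)) := by
    simpa only [qExp_pow_succ_eq_qPoch_mul hq] using (tendsto_qPoch hq).mul_const (qExp q q)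
  exact eq_inv_of_mul_eq_one_right (tendsto_nhds_unique h2 h1)

lemma qExp_pow_succ (m : ℕ) : qExp q (q ^ (m + 1)) = qPoch q m / qPochInf q := by
  rw [qExp_pow_succ_eq_qPoch_mul hq, qExp_self hq, div_eq_mul_inv]

lemma summable_pow_div_qPoch_mul_sq :
    Summable fun x : ℕ × ℕ × ℕ => q ^ x.1 / qPoch q x.1 *
      ((q ^ (x.1 + 1)) ^ x.2.1 / qPoch q x.2.1 * ((q ^ (x.1 + 1)) ^ x.2.2 / qPoch q x.2.2)) := by
  obtain ⟨C, hC0, hC⟩ := exists_norm_div_qPoch_le hq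
  have hg : Summable fun n : ℕ => C * ‖q‖ ^ n :=
    (summable_geometric_of_lt_one (norm_nonneg q) hq).mul_left C
  have hg0 : 0 ≤ fun n : ℕ => C * ‖q‖ ^ n := fun n => by positivity
  refine .of_norm <| .of_nonneg_of_le (fun _ => norm_nonneg _) (fun x => ?_)
    (hg.mul_of_nonneg (hg.mul_of_nonneg hg hg0 hg0) hg0 fun _ => by positivity)
  have hb : ∀ n, ‖(q ^ (x.1 + 1)) ^ n / qPoch q n‖ ≤ C * ‖q‖ ^ n := fun n =>
    (hC _ n).trans (by rw [norm_pow]; gcongr; exact norm_pow_succ_le hq x.1)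
  rw [norm_mul, norm_mul]
  gcongr
  · exact (hC _ _).trans_eq (by rw [norm_pow])
  · exact hb _
  · exact hb _

lemma tsum_pow_div_qPoch_mul_sq (m : ℕ) :
    ∑' p : ℕ × ℕ, q ^ m / qPoch q m *
        ((q ^ (m + 1)) ^ p.1 / qPoch q p.1 * ((q ^ (m + 1)) ^ p.2 / qPoch q p.2))
      = q ^ m / qPoch q m * qExp q (q ^ (m + 1)) ^ 2 := by
  have hs := summable_norm_pow_div_qPoch hq (norm_pow_succ_lt_one hq m)
  rw [tsum_mul_left, ← tsum_mul_tsum_of_summable_norm hs hs, sq, qExp]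

end UnitDisc

theorem stmt4 (q : ℂ) (hq : ‖q‖ < 1) (hq0 : q ≠ 0) :
    ∑' n : ℕ × ℕ × ℕ,
        q ^ (n.1 + n.2.1 + n.2.2 + n.1 * n.2.1 + n.2.1 * n.2.2)
          / (qPoch q n.1 * qPoch q n.2.1 * qPoch q n.2.2)
      = q⁻¹ * (1 - qPochInf q) / qPochInf q ^ 2 := by
  set t : ℕ × ℕ × ℕ → ℂ := fun n => q ^ (n.1 + n.2.1 + n.2.2 + n.1 * n.2.1 + n.2.1 * n.2.2)
    / (qPoch q n.1 * qPoch q n.2.1 * qPoch q n.2.2)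
  have hterm : ∀ (m : ℕ) (p : ℕ × ℕ), t (p.1, m, p.2) = q ^ m / qPoch q m *
      ((q ^ (m + 1)) ^ p.1 / qPoch q p.1 * ((q ^ (m + 1)) ^ p.2 / qPoch q p.2)) :=
    fun m p => pow_div_qPoch_mul_qPoch_mul_qPoch q p.1 m p.2
  have hsummable : Summable fun x : ℕ × ℕ × ℕ => t (x.2.1, x.1, x.2.2) :=
    (summable_pow_div_qPoch_mul_sq hq).congr fun x => (hterm x.1 x.2).symm
  have htelescope : ∑' m, q ^ m * qPoch q m = q⁻¹ * (1 - qPochInf q) := by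
    rw [← ((hasSum_pow_succ_mul_qPoch hq).mul_left q⁻¹).tsum_eq]
    congr 1 with m
    rw [pow_succ', mul_assoc, inv_mul_cancel_left₀ hq0]
  calc ∑' n, t n = ∑' m, ∑' p : ℕ × ℕ, t (p.1, m, p.2) := hsummable.tsum_eq_tsum_tsum_middle
    _ = ∑' m, q ^ m * qPoch q m / qPochInf q ^ 2 := tsum_congr fun m => by
      simp_rw [hterm, tsum_pow_div_qPoch_mul_sq hq, qExp_pow_succ hq]
      field_simp [qPoch_ne_zero hq m]
    _ = q⁻¹ * (1 - qPochInf q) / qPochInf q ^ 2 := by rw [tsum_div_const, htelescope]
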